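/- Let α, β, α₀, β₁ ∈ ℝ. Let f ∈ ℝ[[X]] satisfy f(0) = 0 and the differential equation f' = 1 + α·f + β·f², and let g ∈ ℝ[[X]] satisfy g(0) = 1 and g' = (α₀ + β₁·f)·g. Let f̄ be the compositional inverse of f (f̄(0)=0, f∘f̄ = X), let h = (g∘f̄)⁻¹, and define the polynomials p_n(X) = ∑_{k=0}^{n} (n!/k!)·([Xⁿ](h·f̄ᵏ))·Xᵏ ∈ ℝ[X] (so [h, f̄] = [g,f]⁻¹ is the coefficient array of the p_n as an exponential Riordan array). Then p_0 = 1, p_1 = X − α₀, and for all n ≥ 1, p_{n+1} = (X − (α₀ + n·α))·p_n − n·(β₁ + (n−1)·β)·p_{n−1}. (That is, an exponential Riordan array with tridiagonal production matrix, with diagonal entries α_n = α₀ + nα in arithmetic progression and subdiagonal entries β_n = n(β₁ + (n−1)β) with β_n/n in arithmetic progression, has inverse equal to the coefficient array of a family of monic orthogonal polynomials.) -/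

import Mathlib

/-- Substitution (composition) of formal power series: `psComp h u = h ∘ u`,
the series obtained by substituting `u` (with zero constant term) into `h`. -/
noncomputable def psComp (h u : PowerSeries ℝ) : PowerSeries ℝ :=
  PowerSeries.mk fun n =>
    ∑ k ∈ Finset.range (n + 1), PowerSeries.coeff k h * PowerSeries.coeff n (u ^ k)

/-!
With `A = 1 + αX + βX²` and `Z = α₀ + β₁X`, the differential equations for `f` and `g` become,
after substituting `f̄`, `A f̄' = 1` and `A h' = -Z h`. Hence every column `h f̄ᵏ` of
`[h, f̄]` satisfies `A (h f̄ᵏ)' = -Z h f̄ᵏ + k h f̄ᵏ⁻¹`. Comparing coefficients of `Xⁿ/n!` gives a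
recurrence in `n` for the entries `n! [Xⁿ] (h f̄ᵏ)`, which is the three-term recurrence for the
row polynomials `pₙ` read coefficientwise.
-/

open scoped Nat

namespace PowerSeries

theorem coeff_mul_pow_of_lt {R : Type*} [CommSemiring R] {u : R⟦X⟧}
    (hu : constantCoeff u = 0) (w : R⟦X⟧) {n k : ℕ} (hnk : n < k) :
    coeff n (w * u ^ k) = 0 := by
  obtain ⟨v, rfl⟩ := X_dvd_iff.mpr hu
  rw [mul_pow, mul_left_comm, coeff_X_pow_mul', if_neg (by omega)]

section Derivative

variable {R : Type*} [CommRing R] {A Z f u h : R⟦X⟧}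

theorem mul_derivative_eq_one_of_subst_eq_X (hu : constantCoeff u = 0) (hfu : f.subst u = X)
    (hA : (d⁄dX R f).subst u = A) : A * d⁄dX R u = 1 := by
  have := congrArg (d⁄dX R) hfu
  rwa [derivative_subst (.of_constantCoeff_zero' hu), hA, derivative_X] at this

theorem mul_derivative_mul_pow (hA : A * d⁄dX R u = 1) (hh : A * d⁄dX R h = -(Z * h)) (k : ℕ) :
    A * d⁄dX R (h * u ^ k) = -(Z * (h * u ^ k)) + k • (h * u ^ (k - 1)) := by
  rw [Derivation.leibniz, Derivation.leibniz_pow, smul_eq_mul, smul_eq_mul, smul_eq_mul]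
  linear_combination (k • (h * u ^ (k - 1))) * hA + u ^ k * hh

end Derivative

theorem mul_derivative_inv {K : Type*} [Field K] {A Z u g : K⟦X⟧} (hA : A * d⁄dX K u = 1)
    (hg : d⁄dX K g = Z * g * d⁄dX K u) (hg0 : constantCoeff g ≠ 0) :
    A * d⁄dX K g⁻¹ = -(Z * g⁻¹) := by
  have hgg : g * g⁻¹ = 1 := PowerSeries.mul_inv_cancel g hg0
  rw [derivative_inv', hg]
  linear_combination (-(Z * g⁻¹ ^ 2) * g) * hA - Z * g⁻¹ * hgg

section ExpCoeff

variable {R : Type*} [CommRing R]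

noncomputable def expCoeff (n : ℕ) : R⟦X⟧ →ₗ[R] R := (n ! : R) • coeff n

theorem expCoeff_apply (n : ℕ) (s : R⟦X⟧) : expCoeff n s = n ! * coeff n s := rfl

theorem expCoeff_derivative (n : ℕ) (s : R⟦X⟧) :
    expCoeff n (d⁄dX R s) = expCoeff (n + 1) s := by
  rw [expCoeff_apply, expCoeff_apply, coeff_derivative, Nat.factorial_succ]
  push_cast
  ring

theorem expCoeff_C_mul (n : ℕ) (a : R) (s : R⟦X⟧) : expCoeff n (C a * s) = a * expCoeff n s := by
  rw [← smul_eq_C_mul, map_smul, smul_eq_mul]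

theorem expCoeff_X_mul (n : ℕ) (s : R⟦X⟧) : expCoeff n (X * s) = n * expCoeff (n - 1) s := by
  cases n with
  | zero => simp [expCoeff_apply]
  | succ n =>
    rw [expCoeff_apply, expCoeff_apply, coeff_succ_X_mul, Nat.factorial_succ,
      add_tsub_cancel_right]
    push_cast
    ring

theorem expCoeff_X_mul_derivative (n : ℕ) (s : R⟦X⟧) :
    expCoeff n (X * d⁄dX R s) = n * expCoeff n s := by
  cases n with
  | zero => simp [expCoeff_X_mul]
  | succ n => rw [expCoeff_X_mul, add_tsub_cancel_right, expCoeff_derivative]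

theorem expCoeff_succ_of_mul_derivative_eq (α β : R) {s w : R⟦X⟧}
    (hsw : (1 + C α * X + C β * X ^ 2) * d⁄dX R s = w) (n : ℕ) :
    expCoeff (n + 1) s =
      expCoeff n w - α * n * expCoeff n s - β * n * (n - 1) * expCoeff (n - 1) s := by
  have hX2 : expCoeff n (X * (X * d⁄dX R s)) = n * (n - 1) * expCoeff (n - 1) s := by
    rw [expCoeff_X_mul, expCoeff_X_mul_derivative]
    cases n with
    | zero => simp
    | succ n => push_cast; ring
  have hw : w = d⁄dX R s + C α * (X * d⁄dX R s) + C β * (X * (X * d⁄dX R s)) := by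
    rw [← hsw]; ring
  rw [hw, map_add, map_add, expCoeff_C_mul, expCoeff_C_mul, expCoeff_X_mul_derivative, hX2,
    expCoeff_derivative]
  ring

-- The truncated `n - 1` and `k - 1` are harmless at `n = 0`, `k = 0`: their factors vanish.
theorem expCoeff_succ_mul_pow (α β α₀ β₁ : R) {h u : R⟦X⟧} (k n : ℕ)
    (hk : (1 + C α * X + C β * X ^ 2) * d⁄dX R (h * u ^ k) =
      -((C α₀ + C β₁ * X) * (h * u ^ k)) + k • (h * u ^ (k - 1))) :
    expCoeff (n + 1) (h * u ^ k) = -(α₀ + n * α) * expCoeff n (h * u ^ k)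
      - n * (β₁ + (n - 1) * β) * expCoeff (n - 1) (h * u ^ k)
      + k * expCoeff n (h * u ^ (k - 1)) := by
  rw [expCoeff_succ_of_mul_derivative_eq α β hk, map_add, map_neg, add_mul, map_add,
    expCoeff_C_mul, mul_assoc, expCoeff_C_mul, expCoeff_X_mul, map_nsmul, nsmul_eq_mul]
  ring

end ExpCoeff

end PowerSeries

open PowerSeries

theorem psComp_eq_subst (a u : ℝ⟦X⟧) (hu : constantCoeff u = 0) : psComp a u = a.subst u := by
  ext n
  rw [coeff_subst' (.of_constantCoeff_zero' hu), psComp, coeff_mk,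
    finsum_eq_sum_of_support_subset _ (s := Finset.range (n + 1))]
  · simp only [smul_eq_mul]
  · intro k hk
    by_contra hkn
    have hnk : n < k := by simpa using hkn
    exact hk (by beta_reduce; rw [← one_mul (u ^ k), coeff_mul_pow_of_lt hu 1 hnk, smul_zero])

theorem constantCoeff_psComp (a u : ℝ⟦X⟧) : constantCoeff (psComp a u) = constantCoeff a := by
  rw [← coeff_zero_eq_constantCoeff_apply, psComp, coeff_mk]
  simp

namespace Polynomial

theorem coeff_sum_range_C_mul_X_pow {R : Type*} [Semiring R] {n : ℕ} {c : ℕ → R}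
    (hc : ∀ k, n < k → c k = 0) (k : ℕ) :
    (∑ j ∈ Finset.range (n + 1), C (c j) * X ^ j).coeff k = c k := by
  simp only [finsetSum_coeff, coeff_C_mul_X_pow, Finset.sum_ite_eq, Finset.mem_range]
  split_ifs with hk
  · rfl
  · exact (hc k (by omega)).symm

theorem three_term_recurrence_of_coeff_eq_div_factorial {K : Type*} [Field K] [CharZero K]
    {E : ℕ → ℕ → K} {a b : ℕ → K} {P : ℕ → K[X]} (hP : ∀ n k, (P n).coeff k = E n k / k !)
    (hE : ∀ n k, E (n + 1) k = -a n * E n k - b n * E (n - 1) k + k * E n (k - 1)) (n : ℕ) :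
    P (n + 1) = (X - C (a n)) * P n - C (b n) * P (n - 1) := by
  ext k
  rw [coeff_sub, sub_mul, coeff_sub, coeff_C_mul, coeff_C_mul, hP, hP, hP, hE]
  cases k with
  | zero => simp
  | succ k =>
    rw [coeff_X_mul, hP, add_tsub_cancel_right, Nat.factorial_succ]
    have : (k ! : K) ≠ 0 := Nat.cast_ne_zero.mpr k.factorial_ne_zero
    push_cast
    field_simp
    ring

end Polynomial

theorem exp_riordan_tridiagonal_inverse_orthogonal_general (α β α₀ β₁ : ℝ)
    (f g fbar h : PowerSeries ℝ)
    (hf' : PowerSeries.derivative ℝ f = 1 + PowerSeries.C α * f + PowerSeries.C β * f ^ 2)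
    (hg0 : PowerSeries.constantCoeff g = 1)
    (hg' : PowerSeries.derivative ℝ g = (PowerSeries.C α₀ + PowerSeries.C β₁ * f) * g)
    (hfbar0 : PowerSeries.constantCoeff fbar = 0)
    (hfbar : psComp f fbar = PowerSeries.X)
    (hh : h = (psComp g fbar)⁻¹)
    (p : ℕ → Polynomial ℝ)
    (hp : ∀ n, p n = ∑ k ∈ Finset.range (n + 1),
      Polynomial.C (((n.factorial : ℝ) / (k.factorial : ℝ)) *
        PowerSeries.coeff n (h * fbar ^ k)) * Polynomial.X ^ k) :
    p 0 = 1 ∧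
    p 1 = Polynomial.X - Polynomial.C α₀ ∧
    (∀ n : ℕ, 1 ≤ n →
      p (n + 1) = (Polynomial.X - Polynomial.C (α₀ + (n : ℝ) * α)) * p n -
        Polynomial.C ((n : ℝ) * (β₁ + ((n : ℝ) - 1) * β)) * p (n - 1)) := by
  have hs : HasSubst fbar := .of_constantCoeff_zero' hfbar0
  have hG0 := constantCoeff_psComp g fbar
  rw [psComp_eq_subst _ _ hfbar0] at hfbar hh hG0
  have hA : (1 + C α * X + C β * X ^ 2) * d⁄dX ℝ fbar = 1 := by
    refine mul_derivative_eq_one_of_subst_eq_X hfbar0 hfbar ?_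
    simp only [hf', ← coe_substAlgHom hs, ← algebraMap_eq, map_add, map_mul, map_one, map_pow,
      AlgHom.commutes]
    rw [coe_substAlgHom hs, hfbar]
  have hZ : (1 + C α * X + C β * X ^ 2) * d⁄dX ℝ h = -((C α₀ + C β₁ * X) * h) := by
    refine hh ▸ mul_derivative_inv hA ?_ (by rw [hG0, hg0]; exact one_ne_zero)
    rw [derivative_subst hs, hg']
    simp only [← coe_substAlgHom hs, ← algebraMap_eq, map_add, map_mul, AlgHom.commutes]
    rw [coe_substAlgHom hs, hfbar]
  have hP : ∀ n k, (p n).coeff k = expCoeff n (h * fbar ^ k) / k ! := by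
    intro n k
    rw [hp, Polynomial.coeff_sum_range_C_mul_X_pow, expCoeff_apply]
    · ring
    · intro j hj
      rw [coeff_mul_pow_of_lt hfbar0 h hj, mul_zero]
  have hrec := Polynomial.three_term_recurrence_of_coeff_eq_div_factorial hP
    (fun n k => expCoeff_succ_mul_pow α β α₀ β₁ k n (mul_derivative_mul_pow hA hZ k))
  have hp0 : p 0 = 1 := by simp [hp, hh, hG0, hg0]
  exact ⟨hp0, by simpa [hp0] using hrec 0, fun n _ => hrec n⟩

/-- If the exponential Riordan array `[g, f]` has tridiagonal production matrix, with
diagonal `αₙ = α₀ + nα` in arithmetic progression and subdiagonal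
`βₙ = n(β₁ + (n−1)β)` with `βₙ/n` in arithmetic progression (which corresponds to
`f' = 1 + αf + βf²`, `g'/g = α₀ + β₁ f`), then `[g,f]⁻¹ = [1/(g∘f̄), f̄]` is the
coefficient array of a family of monic orthogonal polynomials satisfying the
corresponding three-term recurrence. -/
theorem exp_riordan_tridiagonal_inverse_orthogonal (α β α₀ β₁ : ℝ)
    (f g fbar h : PowerSeries ℝ)
    (hf0 : PowerSeries.constantCoeff f = 0)
    (hf' : PowerSeries.derivative ℝ f = 1 + PowerSeries.C α * f + PowerSeries.C β * f ^ 2)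
    (hg0 : PowerSeries.constantCoeff g = 1)
    (hg' : PowerSeries.derivative ℝ g = (PowerSeries.C α₀ + PowerSeries.C β₁ * f) * g)
    (hfbar0 : PowerSeries.constantCoeff fbar = 0)
    (hfbar : psComp f fbar = PowerSeries.X)
    (hh : h = (psComp g fbar)⁻¹)
    (p : ℕ → Polynomial ℝ)
    (hp : ∀ n, p n = ∑ k ∈ Finset.range (n + 1),
      Polynomial.C (((n.factorial : ℝ) / (k.factorial : ℝ)) *
        PowerSeries.coeff n (h * fbar ^ k)) * Polynomial.X ^ k) :
    p 0 = 1 ∧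
    p 1 = Polynomial.X - Polynomial.C α₀ ∧
    (∀ n : ℕ, 1 ≤ n →
      p (n + 1) = (Polynomial.X - Polynomial.C (α₀ + (n : ℝ) * α)) * p n -
        Polynomial.C ((n : ℝ) * (β₁ + ((n : ℝ) - 1) * β)) * p (n - 1)) :=
  exp_riordan_tridiagonal_inverse_orthogonal_general α β α₀ β₁ f g fbar h hf' hg0 hg' hfbar0 hfbar
    hh p hp
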